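/- arXiv:2103.11621 — 4 statements merged into one kernel-verified Lean document; each statement's English description precedes it below -/
import Mathlib

section
/- Let X > 1 and set η = 0.076928, ρ = 0.23077, κ = 1.4999676, z = X^η, y = X^ρ. Suppose p is a prime with X/2 < p ≤ X−2 such that p+2 is squarefree, every prime factor of p+2 exceeds z, and κ · Σ_{q prime, z < q ≤ y, q | p+2} (1 − log q/log y) < 1. Then Ω(p+2) ≤ 4. -/
/-!
Since p + 2 is squarefree, Ω(p + 2) is the number of its distinct prime factors. With
L = log y, a prime factor q ∈ (z, y] counts as 1 = (1 - log q / L) + log q / L, and one above y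
counts at most log q / L. Summing, Ω(p + 2) ≤ Σ_{z < q ≤ y} (1 - log q / L) + log(p + 2) / L
< 1/κ + 1/ρ < 5, as p + 2 ≤ X.
-/

open Finset

theorem card_le_sum_filter_one_sub_add_sum {ι : Type*} (s : Finset ι) (P : ι → Prop)
    [DecidablePred P] (f : ι → ℝ) (h : ∀ i ∈ s, ¬P i → 1 ≤ f i) :
    (#s : ℝ) ≤ ∑ i ∈ s with P i, (1 - f i) + ∑ i ∈ s, f i := by
  have hrest : ∑ i ∈ s with ¬P i, (1 - f i) ≤ 0 :=
    sum_nonpos fun i hi => by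
      rw [mem_filter] at hi
      linarith [h i hi.1 hi.2]
  have htotal : ∑ i ∈ s, (1 - f i) = #s - ∑ i ∈ s, f i := by
    rw [sum_sub_distrib, sum_const, nsmul_one]
  linarith [sum_filter_add_sum_filter_not s P (fun i => 1 - f i)]

theorem Squarefree.length_primeFactorsList {n : ℕ} (hn : Squarefree n) :
    n.primeFactorsList.length = #n.primeFactors :=
  (List.toFinset_card_of_nodup
    ((Nat.squarefree_iff_nodup_primeFactorsList hn.ne_zero).mp hn)).symm

theorem Squarefree.sum_log_primeFactors {n : ℕ} (hn : Squarefree n) :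
    ∑ q ∈ n.primeFactors, Real.log q = Real.log n := by
  rw [← Real.log_prod fun q hq => by exact_mod_cast (Nat.prime_of_mem_primeFactors hq).ne_zero,
    ← Nat.cast_prod, Nat.prod_primeFactors_of_squarefree hn]

theorem Squarefree.card_primeFactors_le {n : ℕ} (hn : Squarefree n) {L : ℝ} (hL : 0 < L)
    (P : ℕ → Prop) [DecidablePred P] (hlarge : ∀ q ∈ n.primeFactors, ¬P q → L ≤ Real.log q) :
    (#n.primeFactors : ℝ) ≤
      ∑ q ∈ n.primeFactors with P q, (1 - Real.log q / L) + Real.log n / L := by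
  rw [← hn.sum_log_primeFactors, sum_div]
  exact card_le_sum_filter_one_sub_add_sum _ P _ fun q hq hPq =>
    (one_le_div hL).mpr (hlarge q hq hPq)

theorem stmt3_general (X : ℝ) (hX : 1 < X) (p : ℕ)
    (h2 : (p : ℝ) ≤ X - 2)
    (hsf : Squarefree (p + 2))
    (hz : ∀ q : ℕ, q.Prime → q ∣ p + 2 → X ^ (0.076928 : ℝ) < (q : ℝ))
    (hκ : (1.4999676 : ℝ) *
        ∑ q ∈ (p + 2).primeFactors.filter
          (fun q : ℕ => X ^ (0.076928 : ℝ) < (q : ℝ) ∧ (q : ℝ) ≤ X ^ (0.23077 : ℝ)),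
          (1 - Real.log q / Real.log (X ^ (0.23077 : ℝ))) < 1) :
    (p + 2).primeFactorsList.length ≤ 4 := by
  have hX0 : 0 < X := one_pos.trans hX
  have hL : Real.log (X ^ (0.23077 : ℝ)) = 0.23077 * Real.log X := Real.log_rpow hX0 _
  have hlogX : 0 < Real.log X := Real.log_pos hX
  have hlarge : ∀ q ∈ (p + 2).primeFactors,
      ¬(X ^ (0.076928 : ℝ) < (q : ℝ) ∧ (q : ℝ) ≤ X ^ (0.23077 : ℝ)) →
        Real.log (X ^ (0.23077 : ℝ)) ≤ Real.log q := fun q hq hmid => by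
    have hzq := hz q (Nat.prime_of_mem_primeFactors hq) (Nat.dvd_of_mem_primeFactors hq)
    exact Real.log_le_log (by positivity) (not_le.mp fun hqy => hmid ⟨hzq, hqy⟩).le
  have hcount := hsf.card_primeFactors_le (by rw [hL]; positivity) _ hlarge
  have hlog : Real.log ((p + 2 : ℕ) : ℝ) ≤ Real.log X :=
    Real.log_le_log (by positivity) (by push_cast; linarith)
  have hweight : Real.log ((p + 2 : ℕ) : ℝ) / Real.log (X ^ (0.23077 : ℝ)) ≤ 1 / 0.23077 := by
    rw [hL, div_le_div_iff₀ (by positivity) (by norm_num)]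
    linarith
  have hlt : (#(p + 2).primeFactors : ℝ) < 5 := by linarith
  rw [hsf.length_primeFactorsList]
  exact Nat.lt_succ_iff.mp (by exact_mod_cast hlt)

theorem stmt3 (X : ℝ) (hX : 1 < X) (p : ℕ) (hp : p.Prime)
    (h1 : X / 2 < (p : ℝ)) (h2 : (p : ℝ) ≤ X - 2)
    (hsf : Squarefree (p + 2))
    (hz : ∀ q : ℕ, q.Prime → q ∣ p + 2 → X ^ (0.076928 : ℝ) < (q : ℝ))
    (hκ : (1.4999676 : ℝ) *
        ∑ q ∈ (p + 2).primeFactors.filter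
          (fun q : ℕ => X ^ (0.076928 : ℝ) < (q : ℝ) ∧ (q : ℝ) ≤ X ^ (0.23077 : ℝ)),
          (1 - Real.log q / Real.log (X ^ (0.23077 : ℝ))) < 1) :
    (p + 2).primeFactorsList.length ≤ 4 :=
  stmt3_general X hX p h2 hsf hz hκ
end

section
/- Let δ = 0.307708, ρ = 0.23077, η = 0.076928, κ = 1.4999676 and s = δ/η. Then log(s−1)/s − κ·η·∫_η^ρ (1/u − 1/ρ)·(δ−u)^{−1} du ≥ 0.000032113949. -/
/-!
Partial fractions, `1 / (u (δ - u)) = (1/δ) (1/u + 1/(δ - u))`, give the integral in closed form,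
and the left-hand side becomes `log (s-1) / s - (κη/δ) log (ρ/η) + κη (1/ρ - 1/δ) log ((δ-η)/(δ-ρ))`.
The three coefficients nearly cancel and the three logarithms are all close to `log 3`, so the
inequality holds with a margin of only about `5·10⁻¹⁵`. Each logarithm `2q` is therefore pinned
down to sixteen digits by bounding `exp q` with eighteen terms of its Taylor series (whose remainder
bound needs `q ≤ 1`) and squaring.
-/

open Real Finset Set
open scoped Nat

theorem integral_one_div_sub_one_div_mul_inv_sub {a b c d : ℝ} (ha : a ∈ Ioo 0 d)
    (hb : b ∈ Ioo 0 d) :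
    ∫ u in a..b, (1 / u - 1 / c) * (d - u)⁻¹ =
      1 / d * log (b / a) + (1 / d - 1 / c) * log ((d - a) / (d - b)) := by
  have hsub : uIcc a b ⊆ Ioo 0 d := ordConnected_Ioo.uIcc_subset ha hb
  have hd : 0 < d := ha.1.trans ha.2
  rw [intervalIntegral.integral_eq_sub_of_hasDerivAt
    (f := fun u ↦ 1 / d * log u - (1 / d - 1 / c) * log (d - u))]
  · rw [log_div (by linarith [hb.1]) (by linarith [ha.1]),
      log_div (by linarith [ha.2]) (by linarith [hb.2])]
    ring
  · intro u hu
    obtain ⟨hu0, hud⟩ := hsub hu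
    refine (((hasDerivAt_log hu0.ne').const_mul (1 / d)).sub
      (((hasDerivAt_id u).const_sub d).log (sub_ne_zero.2 hud.ne')
        |>.const_mul (1 / d - 1 / c))).congr_deriv ?_
    simp only [id]
    field_simp [hu0.ne', (sub_pos.2 hud).ne', hd.ne']
    ring
  · refine ContinuousOn.intervalIntegrable fun u hu ↦ ?_
    obtain ⟨hu0, hud⟩ := hsub hu
    exact ContinuousAt.continuousWithinAt (by fun_prop (disch := grind))

theorem two_mul_le_log_of_taylor_sq_le {q x : ℝ} {n : ℕ} (hq0 : 0 ≤ q) (hq1 : q ≤ 1) (hn : 0 < n)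
    (h : (∑ i ∈ range n, q ^ i / i ! + q ^ n * (n + 1) / (n ! * n)) ^ 2 ≤ x) :
    2 * q ≤ log x := by
  have hexp : exp q ≤ _ := exp_bound' hq0 hq1 hn
  rw [le_log_iff_exp_le ((pow_pos ((exp_pos q).trans_le hexp) 2).trans_le h), two_mul, exp_add,
    ← sq]
  exact (pow_le_pow_left₀ (exp_pos q).le hexp 2).trans h

theorem log_le_two_mul_of_le_taylor_sq {q x : ℝ} (n : ℕ) (hq : 0 ≤ q) (hx : 0 < x)
    (h : x ≤ (∑ i ∈ range n, q ^ i / i !) ^ 2) :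
    log x ≤ 2 * q := by
  rw [log_le_iff_le_exp hx, two_mul, exp_add, ← sq]
  exact h.trans <|
    pow_le_pow_left₀ (sum_nonneg fun i _ ↦ by positivity) (sum_le_exp_of_nonneg hq n) 2

theorem stmt4 :
    (0.000032113949 : ℝ) ≤
      Real.log ((0.307708 : ℝ) / 0.076928 - 1) / ((0.307708 : ℝ) / 0.076928) -
        1.4999676 * 0.076928 *
          ∫ u in (0.076928 : ℝ)..(0.23077 : ℝ), (1 / u - 1 / 0.23077) * (0.307708 - u)⁻¹ := by
  rw [integral_one_div_sub_one_div_mul_inv_sub (by norm_num) (by norm_num)]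
  have h₁ : 2 * (10985949562938339 / 20000000000000000) ≤ log (57695 / 19232 : ℝ) :=
    two_mul_le_log_of_taylor_sq_le (n := 18) (by norm_num) (by norm_num) (by norm_num)
      (by norm_num [sum_range_succ, Nat.factorial])
  have h₂ : log (115385 / 38464 : ℝ) ≤ 2 * (5492758120219001 / 10000000000000000) :=
    log_le_two_mul_of_le_taylor_sq 18 (by norm_num) (by norm_num)
      (by norm_num [sum_range_succ, Nat.factorial])
  have h₃ : 2 * (10984649730614879 / 20000000000000000) ≤ log (115390 / 38469 : ℝ) :=
    two_mul_le_log_of_taylor_sq_le (n := 18) (by norm_num) (by norm_num) (by norm_num)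
      (by norm_num [sum_range_succ, Nat.factorial])
  norm_num
  linarith
end

section
/- Let M ≤ N < N₁ ≤ M₁ be real numbers and let a_n be complex numbers defined for integers n with M < n ≤ M₁. Then |Σ_{N < n ≤ N₁} a_n| ≤ ∫_{−∞}^{+∞} K(θ)·|Σ_{M < m ≤ M₁} a_m·e(θm)| dθ, where K(θ) = min(M₁ − M + 1, 1/(π|θ|), 1/(π²θ²)). Moreover, ∫_{−∞}^{+∞} K(θ) dθ ≤ 3·log(2 + M₁ − M). -/
/-! Let `w` be the convolution of the indicators of `[A - 1/2, B + 1/2]` and `[-1/2, 1/2]`: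
a continuous trapezoid equal to `1` at the integers of `[A, B]` and to `0` at all other
integers. Fourier inversion at the integers gives `∑_{A ≤ n ≤ B} a n = ∫ ŵ(θ) S(θ) dθ` with
`S(θ) = ∑ a m e(θ m)`, and `ŵ` is the product of the transforms of the two indicators, each
bounded by the length of its interval and by `1 / (π |θ|)`; hence `|ŵ| ≤ K`, since
`B - A + 1 ≤ M₁ - M + 1 =: P`. On each half-line, `∫ K` is split at `1 / (π P)` and `1 / π`,
the pieces contributing `1 / π`, `log P / π` and `1 / π`. -/

open Finset Real MeasureTheory FourierTransform Convolution

noncomputable section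

def boxcar (a b : ℝ) : ℝ → ℂ := (Set.Icc a b).indicator 1

lemma fourier_boxcar {a b : ℝ} (hab : a ≤ b) (θ : ℝ) :
    𝓕 (boxcar a b) θ = ∫ x in a..b, Complex.exp (-2 * π * θ * Complex.I * x) := by
  rw [Real.fourier_real_eq_integral_exp_smul, intervalIntegral.integral_of_le hab,
    ← integral_Icc_eq_integral_Ioc, ← integral_indicator measurableSet_Icc]
  congr 1 with x
  by_cases hx : x ∈ Set.Icc a b
  · simp only [boxcar, Set.indicator_of_mem hx, Pi.one_apply, smul_eq_mul, mul_one]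
    push_cast; ring_nf
  · simp [boxcar, hx]

lemma norm_fourier_boxcar_le_length {a b : ℝ} (hab : a ≤ b) (θ : ℝ) :
    ‖𝓕 (boxcar a b) θ‖ ≤ b - a := by
  rw [fourier_boxcar hab]
  simpa [abs_of_nonneg (sub_nonneg.2 hab)] using
    intervalIntegral.norm_integral_le_of_norm_le_const (a := a) (b := b) (C := 1)
      (f := fun x : ℝ => Complex.exp (-2 * π * θ * Complex.I * x))
      (fun x _ => by simp [Complex.norm_exp])

lemma norm_fourier_boxcar_le_inv {a b θ : ℝ} (hab : a ≤ b) (hθ : θ ≠ 0) :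
    ‖𝓕 (boxcar a b) θ‖ ≤ 1 / (π * |θ|) := by
  have hc : (-2 * π * θ * Complex.I : ℂ) ≠ 0 := by simp [hθ, pi_ne_zero]
  have hnorm : ‖(-2 * π * θ * Complex.I : ℂ)‖ = 2 * (π * |θ|) := by
    simp [abs_of_pos pi_pos]; ring
  rw [fourier_boxcar hab, integral_exp_mul_complex hc, norm_div, hnorm, div_le_div_iff₀
    (by positivity) (by positivity)]
  calc _ ≤ (1 + 1) * (π * |θ|) := by
        gcongr
        exact (norm_sub_le _ _).trans_eq (by simp [Complex.norm_exp])
    _ = _ := by ring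

lemma integrable_boxcar (a b : ℝ) : Integrable (boxcar a b) :=
  (integrable_indicator_iff measurableSet_Icc).2 (integrableOn_const measure_Icc_lt_top.ne)

lemma boxcar_mul_boxcar_sub (a b c d x t : ℝ) :
    boxcar a b t * boxcar c d (x - t) =
      boxcar (max a (x - d)) (min b (x - c)) t := by
  have hmem : t ∈ Set.Icc (max a (x - d)) (min b (x - c)) ↔
      t ∈ Set.Icc a b ∧ x - t ∈ Set.Icc c d := by
    simp only [Set.mem_Icc, max_le_iff, le_min_iff]
    constructor <;> rintro ⟨⟨h1, h2⟩, h3, h4⟩ <;> refine ⟨⟨?_, ?_⟩, ?_, ?_⟩ <;> linarith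
  simp only [boxcar, Set.indicator_apply, hmem, Pi.one_apply]
  split_ifs <;> simp_all

lemma boxcar_convolution_boxcar_apply (a b c d x : ℝ) :
    (boxcar a b ⋆[ContinuousLinearMap.mul ℂ ℂ] boxcar c d) x =
      (max (min b (x - c) - max a (x - d)) 0 : ℝ) := by
  simp only [convolution_def, ContinuousLinearMap.mul_apply', boxcar_mul_boxcar_sub]
  rw [boxcar, Pi.one_def, integral_indicator_const _ measurableSet_Icc, Real.volume_real_Icc]
  simp

def trapezoid (A B : ℝ) : ℝ → ℂ :=
  boxcar (A - 1/2) (B + 1/2) ⋆[ContinuousLinearMap.mul ℂ ℂ] boxcar (-1/2) (1/2)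

lemma trapezoid_apply (A B x : ℝ) :
    trapezoid A B x = (max (min (B + 1/2) (x + 1/2) - max (A - 1/2) (x - 1/2)) 0 : ℝ) := by
  rw [trapezoid, boxcar_convolution_boxcar_apply]
  norm_num [sub_eq_add_neg, add_comm]

lemma continuous_trapezoid (A B : ℝ) : Continuous (trapezoid A B) := by
  simp only [funext (trapezoid_apply A B)]
  fun_prop

lemma integrable_trapezoid (A B : ℝ) : Integrable (trapezoid A B) :=
  (integrable_boxcar _ _).integrable_convolution _ (integrable_boxcar _ _)

lemma trapezoid_intCast (A B m : ℤ) :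
    trapezoid A B m = if m ∈ Finset.Icc A B then 1 else 0 := by
  rw [trapezoid_apply]
  by_cases h : A ≤ m ∧ m ≤ B
  · have hA : (A : ℝ) ≤ m := by exact_mod_cast h.1
    have hB : (m : ℝ) ≤ B := by exact_mod_cast h.2
    rw [if_pos (Finset.mem_Icc.2 h), min_eq_right (by linarith : (m : ℝ) + 1/2 ≤ B + 1/2),
      max_eq_right (by linarith : (A : ℝ) - 1/2 ≤ m - 1/2)]
    norm_num
  · have hout : (m : ℝ) + 1 ≤ A ∨ (B : ℝ) + 1 ≤ m := by
      rcases not_and_or.1 h with h | h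
      · left; exact_mod_cast (by omega : m + 1 ≤ A)
      · right; exact_mod_cast (by omega : B + 1 ≤ m)
    rw [if_neg (mt Finset.mem_Icc.1 h), max_eq_right, Complex.ofReal_zero]
    rcases hout with h | h
    · linarith [min_le_right (B + 1/2 : ℝ) (m + 1/2), le_max_left (A - 1/2 : ℝ) (m - 1/2)]
    · linarith [min_le_left (B + 1/2 : ℝ) (m + 1/2), le_max_right (A - 1/2 : ℝ) (m - 1/2)]

lemma fourier_trapezoid (A B θ : ℝ) :
    𝓕 (trapezoid A B) θ = 𝓕 (boxcar (A - 1/2) (B + 1/2)) θ * 𝓕 (boxcar (-1/2) (1/2)) θ :=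
  Real.fourier_mul_convolution_eq (integrable_boxcar _ _) (integrable_boxcar _ _) θ

-- Since `1 / 0 = 0`, `sumKernel P 0 = 0`: the bounds by `sumKernel` below hold only for `θ ≠ 0`,
-- hence almost everywhere.
def sumKernel (P θ : ℝ) : ℝ := min P (min (1 / (π * |θ|)) (1 / (π ^ 2 * θ ^ 2)))

lemma sumKernel_nonneg {P : ℝ} (hP : 0 ≤ P) (θ : ℝ) : 0 ≤ sumKernel P θ :=
  le_min hP (le_min (by positivity) (by positivity))

lemma measurable_sumKernel (P : ℝ) : Measurable (sumKernel P) := by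
  unfold sumKernel; fun_prop

lemma sumKernel_le (P θ : ℝ) : sumKernel P θ ≤ (P + 1) * (1 + θ ^ 2)⁻¹ := by
  rw [← div_eq_mul_inv, le_div_iff₀ (by positivity)]
  have hP : sumKernel P θ ≤ P := min_le_left _ _
  have hsq : sumKernel P θ * θ ^ 2 ≤ 1 := by
    rcases eq_or_ne θ 0 with rfl | hθ
    · simp
    calc sumKernel P θ * θ ^ 2 ≤ 1 / (π ^ 2 * θ ^ 2) * θ ^ 2 :=
          mul_le_mul_of_nonneg_right ((min_le_right _ _).trans (min_le_right _ _)) (sq_nonneg θ)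
      _ = 1 / π ^ 2 := by field_simp
      _ ≤ 1 := by rw [div_le_one (by positivity)]; nlinarith [pi_gt_three]
  linarith

lemma integrable_sumKernel {P : ℝ} (hP : 0 ≤ P) : Integrable (sumKernel P) := by
  refine (integrable_inv_one_add_sq.const_mul (P + 1)).mono'
    (measurable_sumKernel P).aestronglyMeasurable (ae_of_all _ fun θ => ?_)
  rw [Real.norm_of_nonneg (sumKernel_nonneg hP θ)]
  exact sumKernel_le P θ

lemma sumKernel_abs (P θ : ℝ) : sumKernel P |θ| = sumKernel P θ := by
  simp only [sumKernel, abs_abs, sq_abs]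

lemma norm_fourier_trapezoid_le {A B P θ : ℝ} (hAB : A ≤ B) (hP : B - A + 1 ≤ P)
    (hθ : θ ≠ 0) :
    ‖𝓕 (trapezoid A B) θ‖ ≤ sumKernel P θ := by
  have hab : A - 1/2 ≤ B + 1/2 := by linarith
  have hcd : (-1/2 : ℝ) ≤ 1/2 := by norm_num
  have hu := norm_fourier_boxcar_le_length hab θ
  have hv := norm_fourier_boxcar_le_length hcd θ
  have hu' := norm_fourier_boxcar_le_inv hab hθ
  have hv' := norm_fourier_boxcar_le_inv hcd hθ
  rw [fourier_trapezoid, norm_mul]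
  refine le_min ?_ (le_min ?_ ?_)
  · calc _ ≤ (B + 1/2 - (A - 1/2)) * (1/2 - (-1/2)) :=
          mul_le_mul hu hv (norm_nonneg _) (by linarith)
      _ ≤ P := by linarith
  · calc _ ≤ 1 / (π * |θ|) * (1/2 - (-1/2)) :=
          mul_le_mul hu' hv (norm_nonneg _) (by positivity)
      _ = 1 / (π * |θ|) := by norm_num
  · calc _ ≤ 1 / (π * |θ|) * (1 / (π * |θ|)) :=
          mul_le_mul hu' hv' (norm_nonneg _) (by positivity)
      _ = 1 / (π ^ 2 * θ ^ 2) := by rw [← sq_abs θ]; field_simp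

lemma integrable_fourier_trapezoid {A B : ℝ} (hAB : A ≤ B) :
    Integrable (𝓕 (trapezoid A B)) := by
  refine (integrable_sumKernel (by linarith : 0 ≤ B - A + 1)).mono'
    (VectorFourier.fourierIntegral_continuous Real.continuous_fourierChar (by fun_prop)
      (integrable_trapezoid A B)).aestronglyMeasurable ?_
  filter_upwards [Measure.ae_ne volume 0] with θ hθ
  exact norm_fourier_trapezoid_le hAB le_rfl hθ

def expSum (t : Finset ℤ) (a : ℤ → ℂ) (θ : ℝ) : ℂ :=
  ∑ m ∈ t, a m * Complex.exp (2 * π * Complex.I * (θ * (m : ℝ)))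

lemma continuous_expSum (t : Finset ℤ) (a : ℤ → ℂ) : Continuous (expSum t a) := by
  unfold expSum; fun_prop

lemma norm_expSum_le (t : Finset ℤ) (a : ℤ → ℂ) (θ : ℝ) :
    ‖expSum t a θ‖ ≤ ∑ m ∈ t, ‖a m‖ := by
  refine (norm_sum_le _ _).trans (Finset.sum_le_sum fun m _ => ?_)
  simp [Complex.norm_exp]

lemma sum_mul_eq_integral_fourier_mul_expSum {w : ℝ → ℂ} (hw : Continuous w)
    (hwi : Integrable w) (hfw : Integrable (𝓕 w)) (t : Finset ℤ) (a : ℤ → ℂ) :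
    ∑ m ∈ t, a m * w m = ∫ θ, 𝓕 w θ * expSum t a θ := by
  have hinv (m : ℤ) :
      w m = ∫ θ, 𝓕 w θ * Complex.exp (2 * π * Complex.I * (θ * (m : ℝ))) := by
    rw [← congrFun (hw.fourierInv_fourier_eq hwi hfw) m, Real.fourierInv_eq']
    congr 1 with θ
    rw [smul_eq_mul, mul_comm]
    congr 2
    simp only [RCLike.inner_apply, conj_trivial]
    push_cast; ring
  have hint (m : ℤ) : Integrable fun θ =>
      𝓕 w θ * (a m * Complex.exp (2 * π * Complex.I * (θ * (m : ℝ)))) := by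
    refine hfw.mul_bdd (c := ‖a m‖) (by fun_prop) (ae_of_all _ fun θ => ?_)
    simp [Complex.norm_exp]
  calc ∑ m ∈ t, a m * w m
      = ∑ m ∈ t, ∫ θ, 𝓕 w θ * (a m * Complex.exp (2 * π * Complex.I * (θ * (m : ℝ)))) := by
        refine Finset.sum_congr rfl fun m _ => ?_
        rw [hinv, ← integral_const_mul]
        congr 1 with θ; ring
    _ = ∫ θ, 𝓕 w θ * expSum t a θ := by
        rw [← integral_finsetSum _ fun m _ => hint m]
        simp only [expSum, Finset.mul_sum]

lemma norm_sum_Icc_le_integral_sumKernel_mul {A B : ℤ} {t : Finset ℤ} (hAB : A ≤ B)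
    (ht : Finset.Icc A B ⊆ t) {P : ℝ} (hP : (B - A + 1 : ℝ) ≤ P) (a : ℤ → ℂ) :
    ‖∑ n ∈ Finset.Icc A B, a n‖ ≤ ∫ θ, sumKernel P θ * ‖expSum t a θ‖ := by
  have hAB' : (A : ℝ) ≤ B := by exact_mod_cast hAB
  have hfw := integrable_fourier_trapezoid hAB'
  have hsum : ∑ n ∈ Finset.Icc A B, a n = ∫ θ, 𝓕 (trapezoid A B) θ * expSum t a θ := by
    rw [← sum_mul_eq_integral_fourier_mul_expSum (continuous_trapezoid _ _)
      (integrable_trapezoid _ _) hfw]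
    simp only [trapezoid_intCast, mul_ite, mul_one, mul_zero, Finset.sum_ite_mem,
      Finset.inter_eq_right.2 ht]
  have hbdd : ∀ᵐ θ ∂volume, ‖expSum t a θ‖ ≤ ∑ m ∈ t, ‖a m‖ :=
    ae_of_all _ (norm_expSum_le t a)
  rw [hsum]
  refine (norm_integral_le_integral_norm _).trans (integral_mono_ae ?_ ?_ ?_)
  · exact (hfw.mul_bdd (continuous_expSum t a).aestronglyMeasurable hbdd).norm
  · refine (integrable_sumKernel (by linarith)).mul_bdd (c := ∑ m ∈ t, ‖a m‖)
      (continuous_expSum t a).norm.aestronglyMeasurable ?_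
    simpa using hbdd
  · filter_upwards [Measure.ae_ne volume 0] with θ hθ
    rw [norm_mul]
    exact mul_le_mul_of_nonneg_right (norm_fourier_trapezoid_le hAB' hP hθ) (norm_nonneg _)

lemma setIntegral_Ioi_sumKernel_le {P : ℝ} (hP : 1 ≤ P) :
    ∫ r in Set.Ioi 0, sumKernel P r ≤ (2 + Real.log P) / π := by
  set s := (π * P)⁻¹ with hs_def
  set t := π⁻¹ with ht_def
  have hs : 0 < s := by positivity
  have ht : 0 < t := by positivity
  have hst : s ≤ t := inv_anti₀ pi_pos (le_mul_of_one_le_right pi_pos.le hP)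
  have hK := integrable_sumKernel (zero_le_one.trans hP)
  have hsplit : ∫ r in Set.Ioi 0, sumKernel P r =
      (∫ r in Set.Ioc 0 s, sumKernel P r) + (∫ r in Set.Ioc s t, sumKernel P r) +
        ∫ r in Set.Ioi t, sumKernel P r := by
    rw [← setIntegral_union (Set.Ioc_disjoint_Ioc_of_le le_rfl) measurableSet_Ioc
      hK.integrableOn hK.integrableOn, Set.Ioc_union_Ioc_eq_Ioc hs.le hst,
      ← setIntegral_union (Set.Ioc_disjoint_Ioi le_rfl) measurableSet_Ioi
      hK.integrableOn hK.integrableOn, Set.Ioc_union_Ioi_eq_Ioi ht.le]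
  have h1 : ∫ r in Set.Ioc 0 s, sumKernel P r ≤ 1 / π := by
    calc _ ≤ ∫ _ in Set.Ioc 0 s, P :=
          setIntegral_mono_on hK.integrableOn (integrableOn_const measure_Ioc_lt_top.ne)
            measurableSet_Ioc fun r _ => min_le_left _ _
      _ = 1 / π := by
          rw [setIntegral_const, Real.volume_real_Ioc_of_le hs.le, smul_eq_mul, sub_zero,
            hs_def]
          field_simp
  have h2 : ∫ r in Set.Ioc s t, sumKernel P r ≤ Real.log P / π := by
    have hint : IntegrableOn (fun r : ℝ => π⁻¹ * r⁻¹) (Set.Ioc s t) :=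
      ((intervalIntegrable_inv_iff.2 (Or.inr (Set.notMem_uIcc_of_lt hs ht))).const_mul _).1
    calc _ ≤ ∫ r in Set.Ioc s t, π⁻¹ * r⁻¹ :=
          setIntegral_mono_on hK.integrableOn hint measurableSet_Ioc fun r hr => by
            have hr0 : 0 < r := hs.trans hr.1
            calc sumKernel P r ≤ 1 / (π * |r|) := (min_le_right _ _).trans (min_le_left _ _)
              _ = π⁻¹ * r⁻¹ := by rw [abs_of_pos hr0]; field_simp
      _ = Real.log P / π := by
          rw [← intervalIntegral.integral_of_le hst, intervalIntegral.integral_const_mul,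
            integral_inv_of_pos hs ht]
          rw [hs_def, ht_def]
          field_simp
  have h3 : ∫ r in Set.Ioi t, sumKernel P r ≤ 1 / π := by
    have hint : IntegrableOn (fun r : ℝ => (π ^ 2)⁻¹ * r ^ (-2 : ℝ)) (Set.Ioi t) :=
      (integrableOn_Ioi_rpow_of_lt (by norm_num) ht).const_mul _
    calc _ ≤ ∫ r in Set.Ioi t, (π ^ 2)⁻¹ * r ^ (-2 : ℝ) :=
          setIntegral_mono_on hK.integrableOn hint measurableSet_Ioi fun r hr => by
            have hr0 : 0 < r := ht.trans hr
            calc sumKernel P r ≤ 1 / (π ^ 2 * r ^ 2) :=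
                  (min_le_right _ _).trans (min_le_right _ _)
              _ = (π ^ 2)⁻¹ * r ^ (-2 : ℝ) := by
                rw [Real.rpow_neg hr0.le, Real.rpow_two]; field_simp
      _ = 1 / π := by
          rw [integral_const_mul, integral_Ioi_rpow_of_lt (by norm_num) ht]
          rw [ht_def, show (-2 : ℝ) + 1 = -1 by norm_num, Real.rpow_neg_one, inv_inv]
          field_simp
  rw [hsplit]
  calc _ ≤ 1 / π + Real.log P / π + 1 / π := by gcongr
    _ = _ := by ring

lemma integral_sumKernel_le {P : ℝ} (hP : 1 ≤ P) :
    ∫ θ, sumKernel P θ ≤ 3 * Real.log (1 + P) := by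
  have hsym : ∫ θ, sumKernel P θ = 2 * ∫ r in Set.Ioi 0, sumKernel P r := by
    simpa only [sumKernel_abs] using integral_comp_abs (f := sumKernel P)
  have hlogP : Real.log P ≤ Real.log (1 + P) := Real.log_le_log (by linarith) (by linarith)
  have hlog2 : Real.log 2 ≤ Real.log (1 + P) := Real.log_le_log two_pos (by linarith)
  have hlogP0 : 0 ≤ Real.log P := Real.log_nonneg hP
  have hL : 4 / 7 ≤ Real.log (1 + P) := by linarith [Real.log_two_gt_d9]
  rw [hsym]
  calc 2 * ∫ r in Set.Ioi 0, sumKernel P r ≤ 2 * ((2 + Real.log P) / π) := by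
        gcongr; exact setIntegral_Ioi_sumKernel_le hP
    _ ≤ 3 * Real.log (1 + P) := by
        rw [mul_div_assoc', div_le_iff₀ pi_pos]
        nlinarith [pi_gt_three]

end

theorem stmt7 (M N N₁ M₁ : ℝ) (h1 : M ≤ N) (h2 : N < N₁) (h3 : N₁ ≤ M₁)
    (a : ℤ → ℂ) :
    ‖∑ n ∈ Finset.Icc (⌊N⌋ + 1) ⌊N₁⌋, a n‖ ≤
      (∫ θ : ℝ, (min (M₁ - M + 1) (min (1 / (π * |θ|)) (1 / (π ^ 2 * θ ^ 2)))) *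
        ‖∑ m ∈ Finset.Icc (⌊M⌋ + 1) ⌊M₁⌋,
          a m * Complex.exp (2 * π * Complex.I * (θ * (m : ℝ)))‖) ∧
    (∫ θ : ℝ, min (M₁ - M + 1) (min (1 / (π * |θ|)) (1 / (π ^ 2 * θ ^ 2)))) ≤
      3 * Real.log (2 + M₁ - M) := by
  refine ⟨?_, ?_⟩
  · rcases lt_or_ge ⌊N₁⌋ (⌊N⌋ + 1) with hempty | hAB
    · rw [Finset.Icc_eq_empty_of_lt hempty, Finset.sum_empty, norm_zero]
      exact integral_nonneg fun θ =>
        mul_nonneg (sumKernel_nonneg (by linarith) θ) (norm_nonneg _)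
    · have hsub : Finset.Icc (⌊N⌋ + 1) ⌊N₁⌋ ⊆ Finset.Icc (⌊M⌋ + 1) ⌊M₁⌋ :=
        Finset.Icc_subset_Icc (by linarith [Int.floor_mono h1]) (Int.floor_mono h3)
      have hlen : ((⌊N₁⌋ : ℤ) : ℝ) - ((⌊N⌋ + 1 : ℤ) : ℝ) + 1 ≤ M₁ - M + 1 := by
        push_cast
        linarith [Int.floor_le N₁, Int.lt_floor_add_one N]
      exact norm_sum_Icc_le_integral_sumKernel_mul hAB hsub hlen a
  · rw [show 2 + M₁ - M = 1 + (M₁ - M + 1) by ring]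
    exact integral_sumKernel_le (by linarith)
end

section
/- Suppose Y₁ ≥ 1, Y₂ ≥ 1 are real, α is real, and a, q are integers with q ≥ 1, gcd(a,q) = 1 and |α − a/q| ≤ q^{−2}. Then Σ_{1 ≤ n ≤ Y₁} min(Y₁Y₂/n, 1/‖αn‖) ≪ Y₁Y₂·(1/q + 1/Y₂ + q/(Y₁Y₂))·log(2·Y₁·q), with an absolute implied constant, where a term with ‖αn‖ = 0 is interpreted as Y₁Y₂/n (i.e., the second argument of the minimum is then +∞). -/
/-!
With `X = Y₁ Y₂` and `N = ⌊Y₁⌋`, cut `1 ≤ n ≤ N` into blocks of `q` consecutive integers and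
write `α = a / q + δ`, `|δ| ≤ q⁻²`.
In a block, the integer `a n - q round (α n)` determines `n` (as `gcd (a, q) = 1`), and it differs
from `q (α n - round (α n))` by `q δ n`, which moves by at most `1` across the block. Hence each
block holds at most `8` values of `n` with `⌊q ‖α n‖⌋ = j`. Those with `j ≥ 1` contribute at most
`q / j` each, so `O (q log q)` per block; those with `j = 0` contribute at most `X / n ≤ X / (k q)`
in the `k`-th block, so `O ((X / q) log N)` in total. In the first block, `X / n ≤ 2 X / q` when
`n > q / 2`, and otherwise `‖α n‖ ≥ ‖a n / q‖ - 1 / (2 q) ≥ 1 / (2 q)`.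
-/

open Finset

/-- Distance from a real number to the nearest integer. -/
noncomputable def dnint (x : ℝ) : ℝ := |x - round x|

lemma sum_le_mul_sum_of_card_fiber_le {ι κ R : Type*} [DecidableEq κ] [Semiring R] [PartialOrder R]
    [IsOrderedRing R] {s : Finset ι} {t : Finset κ} {π : ι → κ} (hπ : ∀ i ∈ s, π i ∈ t)
    {f : ι → R} {g : κ → R} {c : ℕ} (hf : ∀ i ∈ s, f i ≤ g (π i)) (hg : ∀ b ∈ t, 0 ≤ g b)
    (hc : ∀ b ∈ t, #{i ∈ s | π i = b} ≤ c) :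
    ∑ i ∈ s, f i ≤ c * ∑ b ∈ t, g b := by
  rw [← sum_fiberwise_of_maps_to hπ, mul_sum]
  refine sum_le_sum fun b hb => ?_
  calc ∑ i ∈ s with π i = b, f i ≤ ∑ i ∈ s with π i = b, g b :=
        sum_le_sum fun i hi => (mem_filter.1 hi).2 ▸ hf i (mem_filter.1 hi).1
    _ = #{i ∈ s | π i = b} * g b := by rw [sum_const, nsmul_eq_mul]
    _ ≤ c * g b := mul_le_mul_of_nonneg_right (Nat.mono_cast (hc b hb)) (hg b hb)

lemma sum_range_inv_add_one_le_one_add_log (n : ℕ) :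
    ∑ i ∈ range n, ((i : ℝ) + 1)⁻¹ ≤ 1 + Real.log n := by
  have h : ((harmonic n : ℚ) : ℝ) = ∑ i ∈ range n, ((i : ℝ) + 1)⁻¹ := by
    simp [harmonic]
  exact h ▸ harmonic_le_one_add_log n

lemma dnint_le_dnint_add_abs_sub (x y : ℝ) : dnint x ≤ dnint y + |x - y| :=
  calc dnint x ≤ |x - round y| := round_le x (round y)
    _ = |(x - y) + (y - round y)| := by ring_nf
    _ ≤ dnint y + |x - y| := (abs_add_le _ _).trans_eq (add_comm _ _)

lemma inv_le_dnint_intCast_div {q : ℕ} (hq : 0 < q) {m : ℤ} (hm : ¬(q : ℤ) ∣ m) :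
    (q : ℝ)⁻¹ ≤ dnint (m / q) := by
  have hq' : (0 : ℝ) < q := by exact_mod_cast hq
  have hne : m - q * round ((m : ℝ) / q) ≠ 0 := fun h => hm ⟨_, sub_eq_zero.1 h⟩
  have hone : (1 : ℝ) ≤ |((m - q * round ((m : ℝ) / q) : ℤ) : ℝ)| := by
    exact_mod_cast Int.one_le_abs hne
  have hmul : dnint (m / q) * q = |((m - q * round ((m : ℝ) / q) : ℤ) : ℝ)| := by
    rw [dnint, ← abs_of_pos hq', ← abs_mul, abs_of_pos hq']
    push_cast
    congr 1
    field_simp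
  rw [inv_le_iff_one_le_mul₀' hq', mul_comm, hmul]
  exact hone

noncomputable def cappedInvDnint (X α : ℝ) (n : ℕ) : ℝ :=
  min (X / n) (if dnint (α * n) = 0 then X / n else (dnint (α * n))⁻¹)

section cappedInvDnint

variable {X α : ℝ} {n : ℕ}

lemma cappedInvDnint_le_div : cappedInvDnint X α n ≤ X / n := min_le_left _ _

lemma cappedInvDnint_le_inv {c : ℝ} (hc : 0 < c) (h : c ≤ dnint (α * n)) :
    cappedInvDnint X α n ≤ c⁻¹ := by
  rw [cappedInvDnint, if_neg (hc.trans_le h).ne']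
  exact (min_le_right _ _).trans (inv_anti₀ hc h)

end cappedInvDnint

section Blocks

variable {q : ℕ} {a : ℤ} {α X : ℝ}

lemma eq_of_dvd_mul_sub_of_mem_Ioc (hcop : IsCoprime (q : ℤ) a) {m n n' : ℕ}
    (hn : n ∈ Ioc m (m + q)) (hn' : n' ∈ Ioc m (m + q)) (h : (q : ℤ) ∣ a * (n - n')) :
    n = n' := by
  rw [mem_Ioc] at hn hn'
  have := Int.eq_zero_of_abs_lt_dvd (hcop.dvd_of_dvd_mul_left h) (by rw [abs_lt]; omega)
  omega

lemma card_filter_floor_mul_dnint_le (hq : 0 < q)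
    (hcop : IsCoprime (q : ℤ) a) (hα : |α - a / q| ≤ ((q : ℝ) ^ 2)⁻¹) (m j : ℕ) :
    #((Ioc m (m + q)).filter fun n : ℕ => ⌊(q : ℝ) * dnint (α * n)⌋₊ = j) ≤ 8 := by
  have hq' : (0 : ℝ) < q := by exact_mod_cast hq
  set δ := α - a / q
  set c := round (q * δ * m)
  -- `w n ≡ a n [ZMOD q]`, and `|w n|` is within `3 / 2` of `q ‖α n‖`
  set w : ℕ → ℤ := fun n => a * n - q * round (α * n) + c with hw
  have hcard : #(Icc ((j : ℤ) - 1) (j + 2) ∪ Icc (-(j : ℤ) - 2) (1 - j)) ≤ 8 :=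
    (card_union_le _ _).trans (by simp only [Int.card_Icc]; omega)
  refine (card_le_card_of_injOn w (fun n hn => ?_) (fun n hn n' hn' hnn => ?_)).trans hcard
  · obtain ⟨hn, hj⟩ := mem_filter.1 hn
    have hwn : (w n : ℝ) - q * (α * n - round (α * n)) = -(q * δ * (n - m) + (q * δ * m - c)) := by
      simp only [hw, δ]; push_cast; field_simp; ring
    have hshift : |q * δ * ((n : ℝ) - m)| ≤ 1 := by
      have hm : (m : ℝ) < n := by exact_mod_cast (mem_Ioc.1 hn).1
      have hmq : (n : ℝ) ≤ m + q := by exact_mod_cast (mem_Ioc.1 hn).2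
      calc |q * δ * ((n : ℝ) - m)| = q * |δ| * |(n : ℝ) - m| := by
            rw [abs_mul, abs_mul, abs_of_pos hq']
        _ ≤ q * ((q : ℝ) ^ 2)⁻¹ * q := by
            gcongr
            rw [abs_le]; constructor <;> linarith
        _ = 1 := by field_simp
    have hround : |q * δ * m - c| ≤ 1 / 2 := abs_sub_round _
    have hclose : |(w n : ℝ) - q * (α * n - round (α * n))| ≤ 3 / 2 := by
      rw [hwn, abs_neg]; linarith [abs_add_le (q * δ * ((n : ℝ) - m)) (q * δ * m - c)]
    have hqd : |q * (α * n - round (α * n))| = q * dnint (α * n) := by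
      rw [abs_mul, abs_of_pos hq', dnint]
    obtain ⟨hjlo, hjhi⟩ := (Nat.floor_eq_iff (mul_nonneg hq'.le (abs_nonneg _))).1 hj
    have habs := abs_abs_sub_abs_le_abs_sub (w n : ℝ) (q * (α * n - round (α * n)))
    rw [hqd, dnint, abs_le] at habs
    have hlo : (j : ℤ) - 2 < |w n| := by
      have : ((j : ℤ) - 2 : ℝ) < |(w n : ℝ)| := by push_cast; linarith
      exact_mod_cast this
    have hhi : |w n| < j + 3 := by
      have : |(w n : ℝ)| < ((j : ℤ) + 3 : ℝ) := by push_cast; linarith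
      exact_mod_cast this
    simp only [coe_union, coe_Icc, Set.mem_union, Set.mem_Icc]
    rcases abs_cases (w n) with ⟨h, _⟩ | ⟨h, _⟩ <;> omega
  · refine eq_of_dvd_mul_sub_of_mem_Ioc hcop (mem_filter.1 hn).1 (mem_filter.1 hn').1
      ⟨round (α * n) - round (α * n'), ?_⟩
    simp only [hw] at hnn
    linear_combination hnn

lemma cappedInvDnint_le_of_mem_Ioc (hq : 0 < q)
    (hcop : IsCoprime (q : ℤ) a) (hα : |α - a / q| ≤ ((q : ℝ) ^ 2)⁻¹) (hX : 0 ≤ X) {n : ℕ}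
    (hn : n ∈ Ioc 0 q) : cappedInvDnint X α n ≤ 2 * (X / q + q) := by
  have hq' : (0 : ℝ) < q := by exact_mod_cast hq
  rw [mem_Ioc] at hn
  have hn' : (0 : ℝ) < n := by exact_mod_cast hn.1
  rcases le_or_gt (2 * n) q with hsmall | hlarge
  · -- `α n` is within `1 / (2q)` of `a n / q`, which is at distance at least `1 / q` from `ℤ`
    have hndvd : ¬(q : ℤ) ∣ a * n := fun h => by
      have := Int.le_of_dvd (by omega) (hcop.dvd_of_dvd_mul_left h)
      omega
    have hfar := inv_le_dnint_intCast_div hq hndvd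
    have htri := dnint_le_dnint_add_abs_sub (((a * n : ℤ) : ℝ) / q) (α * n)
    have hclose : |((a * n : ℤ) : ℝ) / q - α * n| ≤ (2 * q : ℝ)⁻¹ := by
      have h2n : (2 * n : ℝ) ≤ q := by exact_mod_cast hsmall
      calc |((a * n : ℤ) : ℝ) / q - α * n| = |(α - a / q) * n| := by
            rw [abs_sub_comm]; push_cast; ring_nf
        _ = |α - a / q| * n := by rw [abs_mul, abs_of_pos hn']
        _ ≤ ((q : ℝ) ^ 2)⁻¹ * (q / 2) := by gcongr; linarith
        _ = (2 * q : ℝ)⁻¹ := by field_simp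
    have hlow : (2 * q : ℝ)⁻¹ ≤ dnint (α * n) := by
      have : (q : ℝ)⁻¹ = (2 * q : ℝ)⁻¹ + (2 * q : ℝ)⁻¹ := by field_simp; ring
      linarith
    calc cappedInvDnint X α n ≤ (2 * q : ℝ)⁻¹⁻¹ := cappedInvDnint_le_inv (by positivity) hlow
      _ ≤ 2 * (X / q + q) := by rw [inv_inv]; linarith [div_nonneg hX hq'.le]
  · calc cappedInvDnint X α n ≤ X / n := cappedInvDnint_le_div
      _ ≤ 2 * (X / q) := by
          rw [← mul_div_assoc, div_le_div_iff₀ hn' hq']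
          have : (q : ℝ) < 2 * n := by exact_mod_cast hlarge
          nlinarith
      _ ≤ 2 * (X / q + q) := by linarith

lemma sum_cappedInvDnint_le_of_subset_Ioc (hq : 0 < q)
    (hcop : IsCoprime (q : ℤ) a) (hα : |α - a / q| ≤ ((q : ℝ) ^ 2)⁻¹) {m : ℕ} {s : Finset ℕ}
    (hs : s ⊆ Ioc m (m + q)) {b : ℝ} (hb0 : 0 ≤ b) (hb : ∀ n ∈ s, cappedInvDnint X α n ≤ b) :
    ∑ n ∈ s, cappedInvDnint X α n ≤ 8 * (b + q * (1 + Real.log q)) := by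
  have hq' : (0 : ℝ) < q := by exact_mod_cast hq
  let g : ℕ → ℝ := fun j => if j = 0 then b else q / j
  have hbucket : ∀ n ∈ s, ⌊(q : ℝ) * dnint (α * n)⌋₊ ∈ range (q + 1) := fun n _ => by
    rw [mem_range, Nat.lt_succ_iff]
    exact Nat.floor_le_of_le
      (mul_le_of_le_one_right hq'.le ((abs_sub_round (α * n)).trans (by norm_num)))
  calc ∑ n ∈ s, cappedInvDnint X α n ≤ (8 : ℕ) * ∑ j ∈ range (q + 1), g j := by
        refine sum_le_mul_sum_of_card_fiber_le hbucket (fun n hn => ?_) (fun j _ => ?_)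
          (fun j _ => (card_le_card (filter_subset_filter _ hs)).trans
            (card_filter_floor_mul_dnint_le hq hcop hα m j))
        · by_cases hj : ⌊(q : ℝ) * dnint (α * n)⌋₊ = 0
          · simpa [g, hj] using hb n hn
          · simp only [g, if_neg hj]
            have hjq : (⌊(q : ℝ) * dnint (α * n)⌋₊ : ℝ) / q ≤ dnint (α * n) := by
              rw [div_le_iff₀' hq']
              exact Nat.floor_le (mul_nonneg hq'.le (abs_nonneg _))
            simpa using cappedInvDnint_le_inv (by positivity) hjq
        · simp only [g]; split_ifs <;> positivity
    _ = 8 * (b + q * ∑ j ∈ range q, ((j : ℝ) + 1)⁻¹) := by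
        simp [g, sum_range_succ', mul_sum, div_eq_mul_inv, add_comm]
    _ ≤ 8 * (b + q * (1 + Real.log q)) := by
        gcongr
        exact sum_range_inv_add_one_le_one_add_log q

lemma sum_cappedInvDnint_Icc_le (hq : 0 < q)
    (hcop : IsCoprime (q : ℤ) a) (hα : |α - a / q| ≤ ((q : ℝ) ^ 2)⁻¹) (hX : 0 ≤ X) (N : ℕ) :
    ∑ n ∈ Icc 1 N, cappedInvDnint X α n ≤
      8 * (2 * (X / q + q) + X / q * (1 + Real.log N) + (N + q) * (1 + Real.log q)) := by
  set K := (N - 1) / q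
  have hblock (k : ℕ) : {n ∈ Icc 1 N | (n - 1) / q = k} ⊆ Ioc (k * q) (k * q + q) := fun n hn => by
    rw [mem_filter, mem_Icc, Nat.div_eq_iff hq] at hn
    rw [mem_Ioc]
    omega
  have hmaps : ∀ n ∈ Icc 1 N, (n - 1) / q ∈ range (K + 1) := fun n hn => by
    rw [mem_range, Nat.lt_succ_iff]
    exact Nat.div_le_div_right (by rw [mem_Icc] at hn; omega)
  have hfirst := sum_cappedInvDnint_le_of_subset_Ioc hq hcop hα
    (by simpa only [zero_mul] using hblock 0) (by positivity) fun n hn =>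
      cappedInvDnint_le_of_mem_Ioc hq hcop hα hX
        (by simpa only [zero_mul, zero_add] using hblock 0 hn)
  have hlater (k : ℕ) : ∑ n ∈ Icc 1 N with (n - 1) / q = k + 1, cappedInvDnint X α n ≤
      8 * (X / q * ((k : ℝ) + 1)⁻¹ + q * (1 + Real.log q)) :=
    sum_cappedInvDnint_le_of_subset_Ioc hq hcop hα (hblock (k + 1)) (by positivity) fun n hn => by
      have hn : ((k : ℝ) + 1) * q ≤ n := by exact_mod_cast (mem_Ioc.1 (hblock (k + 1) hn)).1.le
      calc cappedInvDnint X α n ≤ X / n := cappedInvDnint_le_div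
        _ ≤ X / (((k : ℝ) + 1) * q) := div_le_div_of_nonneg_left hX (by positivity) hn
        _ = X / q * ((k : ℝ) + 1)⁻¹ := by field_simp
  have hK : ((K : ℝ) + 1) * q ≤ N + q := by
    have : (K + 1) * q ≤ N + q := by
      have : K * q ≤ N - 1 := Nat.div_mul_le_self _ _
      rw [add_mul]; omega
    exact_mod_cast this
  have hlogK : Real.log K ≤ Real.log N := by
    rcases K.eq_zero_or_pos with hK0 | hK0
    · simp [hK0, Real.log_natCast_nonneg]
    · exact Real.log_le_log (by exact_mod_cast hK0)
        (by exact_mod_cast (Nat.div_le_self _ _).trans (Nat.sub_le N 1))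
  calc ∑ n ∈ Icc 1 N, cappedInvDnint X α n
      = ∑ k ∈ range (K + 1), ∑ n ∈ Icc 1 N with (n - 1) / q = k, cappedInvDnint X α n :=
        (sum_fiberwise_of_maps_to hmaps _).symm
    _ = ∑ k ∈ range K, ∑ n ∈ Icc 1 N with (n - 1) / q = k + 1, cappedInvDnint X α n +
          ∑ n ∈ Icc 1 N with (n - 1) / q = 0, cappedInvDnint X α n := sum_range_succ' _ _
    _ ≤ ∑ k ∈ range K, 8 * (X / q * ((k : ℝ) + 1)⁻¹ + q * (1 + Real.log q)) +
          8 * (2 * (X / q + q) + q * (1 + Real.log q)) :=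
        add_le_add (sum_le_sum fun k _ => hlater k) hfirst
    _ = 8 * (2 * (X / q + q) + X / q * ∑ k ∈ range K, ((k : ℝ) + 1)⁻¹ +
          ((K : ℝ) + 1) * q * (1 + Real.log q)) := by
        rw [← mul_sum, sum_add_distrib, ← mul_sum, sum_const, card_range, nsmul_eq_mul]
        ring
    _ ≤ 8 * (2 * (X / q + q) + X / q * (1 + Real.log N) + (N + q) * (1 + Real.log q)) := by
        have hlogq := Real.log_natCast_nonneg q
        gcongr
        exact (sum_range_inv_add_one_le_one_add_log K).trans (by linarith)
end Blocks

theorem stmt8 : ∃ C : ℝ, 0 < C ∧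
    ∀ (Y₁ Y₂ α : ℝ) (a q : ℤ), 1 ≤ q → Int.gcd a q = 1 →
      |α - (a : ℝ) / (q : ℝ)| ≤ ((q : ℝ) ^ 2)⁻¹ → 1 ≤ Y₁ → 1 ≤ Y₂ →
      ∑ n ∈ Finset.Icc 1 ⌊Y₁⌋₊,
          min (Y₁ * Y₂ / (n : ℝ))
            (if dnint (α * n) = 0 then Y₁ * Y₂ / (n : ℝ) else (dnint (α * n))⁻¹)
        ≤ C * (Y₁ * Y₂ * (1 / (q : ℝ) + 1 / Y₂ + (q : ℝ) / (Y₁ * Y₂)) *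
            Real.log (2 * Y₁ * (q : ℝ))) := by
  refine ⟨56, by norm_num, fun Y₁ Y₂ α a q hq hgcd hα hY₁ hY₂ => ?_⟩
  lift q to ℕ using by omega
  have hcop : IsCoprime (q : ℤ) a := (Int.isCoprime_iff_gcd_eq_one.2 hgcd).symm
  simp only [Int.cast_natCast] at hα ⊢
  have hq0 : 0 < q := by exact_mod_cast hq
  have hq1 : (1 : ℝ) ≤ q := by exact_mod_cast hq0
  have hN : (⌊Y₁⌋₊ : ℝ) ≤ Y₁ := Nat.floor_le (by linarith)
  have hN1 : (1 : ℝ) ≤ ⌊Y₁⌋₊ := by exact_mod_cast Nat.le_floor (by exact_mod_cast hY₁)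
  set X := Y₁ * Y₂
  set L := Real.log (2 * Y₁ * q)
  have hX : 0 ≤ X := by positivity
  have hA : 0 ≤ X / q := by positivity
  have hL : 1 ≤ 2 * L := by
    have : Real.log 2 ≤ L := Real.log_le_log two_pos (by nlinarith)
    linarith [Real.log_two_gt_d9]
  have hlogN : Real.log ⌊Y₁⌋₊ ≤ L := Real.log_le_log (by positivity) (by nlinarith)
  have hlogq : Real.log q ≤ L := Real.log_le_log (by positivity) (by nlinarith)
  have hform : X * (1 / q + 1 / Y₂ + q / X) = X / q + Y₁ + q := by
    simp only [X]; field_simp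
  rw [hform]
  calc _ ≤ 8 * (2 * (X / q + q) + X / q * (1 + Real.log ⌊Y₁⌋₊) +
          (⌊Y₁⌋₊ + q) * (1 + Real.log q)) := sum_cappedInvDnint_Icc_le hq0 hcop hα hX _
    _ ≤ 56 * ((X / q + Y₁ + q) * L) := by
        have h1 : X / q * (1 + Real.log ⌊Y₁⌋₊) ≤ X / q * (3 * L) := by gcongr; linarith
        have h2 : ((⌊Y₁⌋₊ : ℝ) + q) * (1 + Real.log q) ≤ (Y₁ + q) * (3 * L) := by
          gcongr
          linarith
        have h3 : 0 ≤ X / q * (2 * L - 1) := mul_nonneg hA (by linarith)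
        have h4 : 0 ≤ q * (2 * L - 1) := mul_nonneg (by positivity) (by linarith)
        have h5 : 0 ≤ Y₁ * L := mul_nonneg (by linarith) (by linarith)
        nlinarith
end
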